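/- Let v be a 4×4 real matrix and suppose there exists μ ∈ ℂ such that the kernel of v_ℂ − μ·I has complex dimension at least 2 (i.e., some eigenvalue of v has geometric multiplicity ≥ 2, equivalently v has two Jordan blocks with the same eigenvalue). Then for every x₀ ∈ ℝ⁴ there exists a nonzero real linear functional ξ on ℝ⁴ such that ξ(exp(t·v)·x₀) = 0 for all t ∈ ℝ; consequently every orbit of the flow t ↦ exp(t·v)·x₀ is contained in a linear hyperplane of ℝ⁴ (so every orbit is a degenerate curve). -/

import Mathlib

open Matrix

/-- The geometric multiplicity of `μ ∈ ℂ` as an eigenvalue of (the complexification of)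
a real 4×4 matrix `v`: the complex dimension of `ker (v_ℂ − μ·I)`. -/
noncomputable def geomMult (v : Matrix (Fin 4) (Fin 4) ℝ) (μ : ℂ) : ℕ :=
  Module.finrank ℂ
    (LinearMap.ker (Matrix.toLin' (v.map (fun x => (x : ℂ)) - μ • (1 : Matrix (Fin 4) (Fin 4) ℂ))))

/-- Complexification of a real vector, as an `ℝ`-linear map. -/
noncomputable def cL : (Fin 4 → ℝ) →ₗ[ℝ] (Fin 4 → ℂ) where
  toFun x := fun i => (x i : ℂ)
  map_add' x y := by funext i; simp
  map_smul' r x := by funext i; simp [Complex.real_smul]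

lemma cL_mulVec (w : Matrix (Fin 4) (Fin 4) ℝ) (x : Fin 4 → ℝ) :
    (w.map (fun a => (a : ℂ))).mulVec (cL x) = cL (w.mulVec x) := by
  funext i
  simp [cL, Matrix.mulVec, dotProduct]

lemma span_top_complexify {f : Fin 4 → (Fin 4 → ℝ)}
    (hf : Submodule.span ℝ (Set.range f) = ⊤) :
    Submodule.span ℂ (Set.range fun i => cL (f i)) = ⊤ := by
  set S := Submodule.span ℂ (Set.range fun i => cL (f i)) with hS
  have hsub : ∀ x : Fin 4 → ℝ, cL x ∈ S := by
    intro x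
    have hx : x ∈ Submodule.span ℝ (Set.range f) := hf ▸ Submodule.mem_top
    have hle : Submodule.span ℝ (Set.range f) ≤ (S.restrictScalars ℝ).comap cL := by
      rw [Submodule.span_le]
      rintro _ ⟨i, rfl⟩
      exact Submodule.subset_span ⟨i, rfl⟩
    exact hle hx
  rw [eq_top_iff]
  intro z _
  have hz : z = cL (fun i => (z i).re) + Complex.I • cL (fun i => (z i).im) := by
    funext i
    simp [cL, Complex.ext_iff]
  rw [hz]
  exact S.add_mem (hsub _) (S.smul_mem _ (hsub _))

/-- If `μ` has geometric multiplicity at least 2, then the cyclic subspace generated by any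
vector `x₀` is a proper subspace. -/
lemma span_ne_top (v : Matrix (Fin 4) (Fin 4) ℝ) (μ : ℂ) (hμ : 2 ≤ geomMult v μ)
    (x₀ : Fin 4 → ℝ) :
    Submodule.span ℝ (Set.range fun i : Fin 4 => (v ^ (i : ℕ)).mulVec x₀) ≠ ⊤ := by
  intro htop
  set A : Matrix (Fin 4) (Fin 4) ℂ := v.map (fun a => (a : ℂ)) with hA
  set z : Fin 4 → ℂ := cL x₀ with hz
  set g : ℕ → (Fin 4 → ℂ) := fun k => (A ^ k).mulVec z with hg
  have hpow : ∀ k : ℕ, g k = cL ((v ^ k).mulVec x₀) := by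
    intro k
    have h2 : A ^ k = (v ^ k).map (fun a => (a : ℂ)) := by
      have h : (fun a : ℝ => (a : ℂ)) = ⇑(algebraMap ℝ ℂ) := rfl
      rw [hA, h, ← RingHom.mapMatrix_apply, ← RingHom.mapMatrix_apply, map_pow]
    rw [hg]
    dsimp only
    rw [h2, cL_mulVec]
  have hspan : Submodule.span ℂ (Set.range fun i : Fin 4 => g (i : ℕ)) = ⊤ := by
    have h := span_top_complexify (f := fun i : Fin 4 => (v ^ (i : ℕ)).mulVec x₀) htop
    convert h using 3
    funext i
    simpa using hpow (i : ℕ)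
  have hcard : Fintype.card (Fin 4) = Module.finrank ℂ (Fin 4 → ℂ) := by simp
  let b : Module.Basis (Fin 4) ℂ (Fin 4 → ℂ) :=
    basisOfTopLeSpanOfCardEqFinrank (fun i : Fin 4 => g (i : ℕ)) (le_of_eq hspan.symm) hcard
  have hb : ∀ i : Fin 4, b i = g (i : ℕ) := fun i =>
    congrFun (coe_basisOfTopLeSpanOfCardEqFinrank _ _ _) i
  have hb0 : b 0 = g 0 := hb 0
  have hb1 : b 1 = g 1 := hb 1
  have hb2 : b 2 = g 2 := hb 2
  have hb3 : b 3 = g 3 := hb 3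
  set K := LinearMap.ker (Matrix.toLin' (A - μ • (1 : Matrix (Fin 4) (Fin 4) ℂ))) with hK
  have hgm : geomMult v μ = Module.finrank ℂ K := rfl
  have hAg : ∀ k : ℕ, A.mulVec (g k) = g (k + 1) := by
    intro k
    rw [hg]
    dsimp only
    rw [Matrix.mulVec_mulVec, ← pow_succ']
  -- the fourth coordinate functional restricted to the eigenspace is injective
  let ψ : K →ₗ[ℂ] ℂ := (b.coord 3).comp K.subtype
  have hinj : Function.Injective ψ := by
    rw [← LinearMap.ker_eq_bot, LinearMap.ker_eq_bot']
    intro w hw3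
    set u : Fin 4 → ℂ := (w : Fin 4 → ℂ) with hu
    have h1 : A.mulVec u = μ • u := by
      have hm := w.2
      rw [LinearMap.mem_ker, Matrix.toLin'_apply, Matrix.sub_mulVec, Matrix.smul_mulVec,
        Matrix.one_mulVec, sub_eq_zero] at hm
      exact hm
    set c : Fin 4 → ℂ := fun i => b.repr u i with hc
    set a : Fin 4 → ℂ := fun i => b.repr (g 4) i with ha
    have hwrepr : u = c 0 • g 0 + c 1 • g 1 + c 2 • g 2 + c 3 • g 3 := by
      have h := b.sum_repr u
      rw [Fin.sum_univ_four, hb0, hb1, hb2, hb3] at h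
      exact h.symm
    have hu4 : g 4 = a 0 • g 0 + a 1 • g 1 + a 2 • g 2 + a 3 • g 3 := by
      have h := b.sum_repr (g 4)
      rw [Fin.sum_univ_four, hb0, hb1, hb2, hb3] at h
      exact h.symm
    have heq : c 0 • g 1 + c 1 • g 2 + c 2 • g 3 + c 3 • g 4
        = μ • (c 0 • g 0 + c 1 • g 1 + c 2 • g 2 + c 3 • g 3) := by
      have hAw : A.mulVec u = c 0 • g 1 + c 1 • g 2 + c 2 • g 3 + c 3 • g 4 := by
        rw [hwrepr]
        simp only [Matrix.mulVec_add, Matrix.mulVec_smul, hAg]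
      rw [← hAw, h1, hwrepr]
    rw [hu4] at heq
    have hzero : (c 3 * a 0 - μ * c 0) • g 0 + (c 0 + c 3 * a 1 - μ * c 1) • g 1
        + (c 1 + c 3 * a 2 - μ * c 2) • g 2 + (c 2 + c 3 * a 3 - μ * c 3) • g 3 = 0 := by
      linear_combination (norm := module) heq
    set d : Fin 4 → ℂ := ![c 3 * a 0 - μ * c 0, c 0 + c 3 * a 1 - μ * c 1,
      c 1 + c 3 * a 2 - μ * c 2, c 2 + c 3 * a 3 - μ * c 3] with hd
    have hsum : ∑ i, d i • b i = 0 := by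
      rw [Fin.sum_univ_four, hb0, hb1, hb2, hb3]
      simpa [hd] using hzero
    have hdz := Fintype.linearIndependent_iff.mp b.linearIndependent d hsum
    have hc3 : c 3 = 0 := hw3
    have e3 := hdz 3
    have e2 := hdz 2
    have e1 := hdz 1
    simp only [hd, Matrix.cons_val_zero, Matrix.cons_val_one, Matrix.head_cons,
      Matrix.cons_val_two, Matrix.tail_cons, Matrix.cons_val_three] at e1 e2 e3
    have hc2 : c 2 = 0 := by rw [hc3] at e3; linear_combination e3
    have hc1 : c 1 = 0 := by rw [hc3, hc2] at e2; linear_combination e2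
    have hc0 : c 0 = 0 := by rw [hc3, hc1] at e1; linear_combination e1
    have hu0 : u = 0 := by rw [hwrepr, hc0, hc1, hc2, hc3]; simp
    exact Subtype.ext hu0
  have hle : Module.finrank ℂ K ≤ Module.finrank ℂ ℂ :=
    LinearMap.finrank_le_finrank_of_injective hinj
  rw [Module.finrank_self] at hle
  rw [hgm] at hμ
  omega

/-- `mulVec` by a fixed vector, as a linear map in the matrix argument. -/
noncomputable def mulVecL (x₀ : Fin 4 → ℝ) : Matrix (Fin 4) (Fin 4) ℝ →ₗ[ℝ] (Fin 4 → ℝ) where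
  toFun M := M.mulVec x₀
  map_add' M N := Matrix.add_mulVec M N x₀
  map_smul' r M := Matrix.smul_mulVec r M x₀

/-- By Cayley–Hamilton, all powers `vᵏ x₀` stay in the span of the first four. -/
lemma pow_mulVec_mem (v : Matrix (Fin 4) (Fin 4) ℝ) (x₀ : Fin 4 → ℝ) (k : ℕ) :
    (v ^ k).mulVec x₀ ∈
      Submodule.span ℝ (Set.range fun i : Fin 4 => (v ^ (i : ℕ)).mulVec x₀) := by
  set W := Submodule.span ℝ (Set.range fun i : Fin 4 => (v ^ (i : ℕ)).mulVec x₀) with hW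
  have hv4 : v ^ 4 = -∑ i ∈ Finset.range 4, v.charpoly.coeff i • v ^ i := by
    have hCH := Matrix.aeval_self_charpoly v
    have hdeg : v.charpoly.natDegree = 4 := by
      rw [Matrix.charpoly_natDegree_eq_dim]; simp
    have hmon : v.charpoly.Monic := Matrix.charpoly_monic v
    have h := Polynomial.aeval_eq_sum_range (R := ℝ) (p := v.charpoly) (x := v)
    rw [hCH, hdeg, Finset.sum_range_succ] at h
    have hc4 : v.charpoly.coeff 4 = 1 := by
      have := hmon.leadingCoeff
      rwa [Polynomial.leadingCoeff, hdeg] at this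
    rw [hc4, one_smul] at h
    have h2 : ∑ i ∈ Finset.range 4, v.charpoly.coeff i • v ^ i + v ^ 4 = 0 := h.symm
    rw [add_comm] at h2
    exact eq_neg_of_add_eq_zero_left h2
  induction k using Nat.strong_induction_on with
  | _ k ih =>
    rcases lt_or_ge k 4 with hk | hk
    · exact Submodule.subset_span ⟨(⟨k, hk⟩ : Fin 4), rfl⟩
    · obtain ⟨m, rfl⟩ : ∃ m, k = m + 4 := ⟨k - 4, by omega⟩
      have hsplit : v ^ (m + 4) = -∑ i ∈ Finset.range 4, v.charpoly.coeff i • v ^ (m + i) := by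
        rw [pow_add, hv4, mul_neg, Finset.mul_sum]
        congr 1
        congr 1
        funext i
        rw [mul_smul_comm, ← pow_add]
      have : (v ^ (m + 4)).mulVec x₀ = mulVecL x₀ (v ^ (m + 4)) := rfl
      rw [this, hsplit, map_neg, map_sum]
      refine W.neg_mem (Submodule.sum_mem W fun i hi => ?_)
      rw [_root_.map_smul]
      refine W.smul_mem _ ?_
      have him : m + i < m + 4 := by
        have := Finset.mem_range.mp hi; omega
      exact ih (m + i) him

/-- If some complex eigenvalue of the real 4×4 matrix `v` has geometric multiplicity ≥ 2
(i.e. `v` has two Jordan blocks with the same eigenvalue), then every orbit of the flow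
`t ↦ exp(t·v)·x₀` lies in a linear hyperplane: there is a nonzero linear functional `ξ`
vanishing on the whole orbit. -/
theorem orbit_in_hyperplane_of_geomMult_ge_two (v : Matrix (Fin 4) (Fin 4) ℝ)
    (h : ∃ μ : ℂ, 2 ≤ geomMult v μ) :
    ∀ x₀ : Fin 4 → ℝ, ∃ ξ : (Fin 4 → ℝ) →ₗ[ℝ] ℝ, ξ ≠ 0 ∧
      ∀ t : ℝ, ξ ((NormedSpace.exp (t • v)).mulVec x₀) = 0 := by
  intro x₀
  obtain ⟨μ, hμ⟩ := h
  set W := Submodule.span ℝ (Set.range fun i : Fin 4 => (v ^ (i : ℕ)).mulVec x₀) with hWdef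
  have hW : W ≠ ⊤ := span_ne_top v μ hμ x₀
  have hpow : ∀ k : ℕ, (v ^ k).mulVec x₀ ∈ W := pow_mulVec_mem v x₀
  obtain ⟨ξ, hξ0, hξW⟩ :=
    Submodule.exists_dual_map_eq_bot_of_lt_top (lt_top_iff_ne_top.mpr hW) inferInstance
  refine ⟨ξ, hξ0, fun t => ?_⟩
  have hvan : ∀ y ∈ W, ξ y = 0 := by
    intro y hy
    have : ξ y ∈ W.map ξ := ⟨y, hy, rfl⟩
    rwa [hξW, Submodule.mem_bot] at this
  let L : Matrix (Fin 4) (Fin 4) ℝ →ₗ[ℝ] ℝ := ξ.comp (mulVecL x₀)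
  let Φ : Matrix (Fin 4) (Fin 4) ℝ →L[ℝ] ℝ := LinearMap.toContinuousLinearMap L
  letI : SeminormedRing (Matrix (Fin 4) (Fin 4) ℝ) := Matrix.linftyOpSemiNormedRing
  letI : NormedRing (Matrix (Fin 4) (Fin 4) ℝ) := Matrix.linftyOpNormedRing
  letI : NormedAlgebra ℝ (Matrix (Fin 4) (Fin 4) ℝ) := Matrix.linftyOpNormedAlgebra
  have hsum : HasSum (fun n : ℕ => ((n.factorial : ℝ))⁻¹ • (t • v) ^ n)
      (NormedSpace.exp (t • v)) := NormedSpace.exp_series_hasSum_exp' (t • v)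
  have hsum2 : HasSum (fun n : ℕ => Φ (((n.factorial : ℝ))⁻¹ • (t • v) ^ n))
      (Φ (NormedSpace.exp (t • v))) := hsum.mapL Φ
  have hzero : (fun n : ℕ => Φ (((n.factorial : ℝ))⁻¹ • (t • v) ^ n)) = fun _ => (0 : ℝ) := by
    funext n
    have h1 : (t • v) ^ n = t ^ n • v ^ n := smul_pow t v n
    rw [h1, _root_.map_smul, _root_.map_smul]
    have h2 : Φ (v ^ n) = ξ ((v ^ n).mulVec x₀) := rfl
    rw [h2, hvan _ (hpow n), smul_zero, smul_zero]
  rw [hzero] at hsum2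
  exact hsum2.unique hasSum_zero
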